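/- arXiv:2306.13788 — 4 statements merged into one kernel-verified Lean document; each statement's English description precedes it below -/
import Mathlib

section
/- Let a, b > 0 and let f satisfy hypothesis (H) and be of type A, B, or C. Then every admissible speed c (for f, a, b) satisfies the universal lower bound c ≥ (b/a) · sup_{v ∈ (0,1]} F(v)/v, independently of the shape of f. -/
open Real Set Filter Topology

/-- `Ffn f v = ∫₀^v f(s) ds`. -/
noncomputable def Ffn (f : ℝ → ℝ) (v : ℝ) : ℝ := ∫ s in (0:ℝ)..v, f s

/-- Hypothesis (H): `f` continuous on `[0,1]`, vanishing at the endpoints,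
with linear controls at `0` and `1`. -/
def HypH (f : ℝ → ℝ) : Prop :=
  ContinuousOn f (Set.Icc 0 1) ∧ f 0 = 0 ∧ f 1 = 0 ∧
    ∃ k > (0:ℝ), ∀ s ∈ Set.Icc (0:ℝ) 1, |f s| ≤ k * s ∧ |f s| ≤ k * (1 - s)

/-- Type A (monostable): `f > 0` on `(0,1)`. -/
def TypeA (f : ℝ → ℝ) : Prop := ∀ s ∈ Set.Ioo (0:ℝ) 1, 0 < f s

/-- Type B (combustion) with switching point `α`. -/
def TypeB (f : ℝ → ℝ) (α : ℝ) : Prop :=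
  α ∈ Set.Ioo (0:ℝ) 1 ∧ (∀ s ∈ Set.Icc (0:ℝ) α, f s = 0) ∧
    ∀ s ∈ Set.Ioo α 1, 0 < f s

/-- Type C (bistable) with switching point `α` and `∫₀¹ f ≥ 0`. -/
def TypeC (f : ℝ → ℝ) (α : ℝ) : Prop :=
  α ∈ Set.Ioo (0:ℝ) 1 ∧ (∀ s ∈ Set.Ioo (0:ℝ) α, f s < 0) ∧
    (∀ s ∈ Set.Ioo α 1, 0 < f s) ∧ 0 ≤ Ffn f 1

/-- `R_{a,b}(s) = √(s(2a + b²s))/(a + b²s)`. -/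
noncomputable def Rab (a b s : ℝ) : ℝ :=
  Real.sqrt (s * (2 * a + b ^ 2 * s)) / (a + b ^ 2 * s)

/-- `c` is an admissible speed for `(f, a, b)`: the first-order reduction
`y' = c·a·R_{a,b}(y) − f(v)` has a solution on `[0,1]` with `y(0) = y(1) = 0`
and `y > 0` on `(0,1)`. -/
def Admissible (f : ℝ → ℝ) (a b c : ℝ) : Prop :=
  ∃ y : ℝ → ℝ, y 0 = 0 ∧ y 1 = 0 ∧ (∀ v ∈ Set.Ioo (0:ℝ) 1, 0 < y v) ∧
    ∀ v ∈ Set.Icc (0:ℝ) 1,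
      HasDerivWithinAt y (c * a * Rab a b (y v) - f v) (Set.Icc 0 1) v

/-- A (monotone) front profile propagating with speed `c` for parameters `a, b`:
a strictly increasing `C²` solution of `(v'/√(a² − b²(v')²))' − c v' + f(v) = 0`
with `|v'| < a/b`, connecting `0` (at `−∞`) and `1` (at `+∞`). -/
def FrontProfile (f : ℝ → ℝ) (a b c : ℝ) (v : ℝ → ℝ) : Prop :=
  StrictMono v ∧ ContDiff ℝ 2 v ∧ (∀ z, |deriv v z| < a / b) ∧
    (∀ z, deriv (fun t => deriv v t / Real.sqrt (a ^ 2 - b ^ 2 * (deriv v t) ^ 2)) z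
        - c * deriv v z + f (v z) = 0) ∧
    Filter.Tendsto v Filter.atBot (nhds 0) ∧ Filter.Tendsto v Filter.atTop (nhds 1)

/-!
Along an admissible solution `y`, the quantity `W = y + F` satisfies `W' = c·a·R_{a,b}(y)` and
`W(0) = 0`. Since `R_{a,b} > 0` on `(0, ∞)`, a negative `c` would make `W` strictly decreasing,
contradicting `W(1) = F(1) ≥ 0`; so `c ≥ 0`. Since `R_{a,b} ≤ 1/b`, the function
`W(v) − (c a / b) v` is then nonincreasing, whence `F(v) ≤ W(v) ≤ (c a / b) v` on `[0,1]`.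
-/

section Rab

variable {a b : ℝ}

lemma Rab_pos (ha : 0 < a) {s : ℝ} (hs : 0 < s) : 0 < Rab a b s :=
  div_pos (Real.sqrt_pos.mpr (by positivity)) (by positivity)

lemma Rab_le_one_div (ha : 0 < a) (hb : 0 < b) {s : ℝ} (hs : 0 ≤ s) : Rab a b s ≤ 1 / b := by
  have hden : 0 < a + b ^ 2 * s := by positivity
  rw [Rab, div_le_iff₀ hden, one_div_mul_eq_div, Real.sqrt_le_left (by positivity), div_pow,
    le_div_iff₀ (by positivity)]
  -- `(a + b²s)² − b²·s(2a + b²s) = a²`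
  nlinarith [sq_nonneg a]

end Rab

lemma Ffn_zero (f : ℝ → ℝ) : Ffn f 0 = 0 :=
  intervalIntegral.integral_same

lemma hasDerivWithinAt_Ffn {f : ℝ → ℝ} {l v : ℝ} (hf : ContinuousOn f (Icc 0 l))
    (hv : v ∈ Icc 0 l) : HasDerivWithinAt (Ffn f) (f v) (Icc 0 l) v := by
  have : Fact (v ∈ Icc 0 l) := ⟨hv⟩
  refine intervalIntegral.integral_hasDerivWithinAt_right (t := Icc 0 l) ?_
    (hf.stronglyMeasurableAtFilter_nhdsWithin measurableSet_Icc v) (hf v hv)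
  exact (hf.mono (uIcc_subset_Icc (left_mem_Icc.2 (hv.1.trans hv.2)) hv)).intervalIntegrable

lemma Ffn_one_nonneg {f : ℝ → ℝ} (hH : HypH f) (hT : TypeA f ∨ ∃ α : ℝ, TypeB f α ∨ TypeC f α) :
    0 ≤ Ffn f 1 := by
  obtain ⟨-, hf0, hf1, -⟩ := hH
  rcases hT with hA | ⟨α, ⟨-, hB0, hBpos⟩ | hC⟩
  · refine intervalIntegral.integral_nonneg zero_le_one fun s hs => ?_
    rcases eq_endpoints_or_mem_Ioo_of_mem_Icc hs with rfl | rfl | hs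
    exacts [hf0.ge, hf1.ge, (hA s hs).le]
  · refine intervalIntegral.integral_nonneg zero_le_one fun s ⟨hs0, hs1⟩ => ?_
    rcases le_or_gt s α with hsα | hαs
    · exact (hB0 s ⟨hs0, hsα⟩).ge
    rcases hs1.eq_or_lt with rfl | hs1
    exacts [hf1.ge, (hBpos s ⟨hαs, hs1⟩).le]
  · exact hC.2.2.2

namespace Admissible

variable {f : ℝ → ℝ} {a b c : ℝ}

lemma exists_hasDerivWithinAt_add_Ffn (hf : ContinuousOn f (Icc 0 1)) (hc : Admissible f a b c) :
    ∃ y : ℝ → ℝ, y 0 = 0 ∧ y 1 = 0 ∧ (∀ v ∈ Ioo (0:ℝ) 1, 0 < y v) ∧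
      ∀ v ∈ Icc (0:ℝ) 1,
        HasDerivWithinAt (fun u => y u + Ffn f u) (c * a * Rab a b (y v)) (Icc 0 1) v := by
  obtain ⟨y, hy0, hy1, hypos, hyd⟩ := hc
  refine ⟨y, hy0, hy1, hypos, fun v hv => ?_⟩
  have := (hyd v hv).add (hasDerivWithinAt_Ffn hf hv)
  rwa [sub_add_cancel] at this

lemma nonneg (ha : 0 < a) (hf : ContinuousOn f (Icc 0 1)) (hF : 0 ≤ Ffn f 1)
    (hc : Admissible f a b c) : 0 ≤ c := by
  obtain ⟨y, hy0, hy1, hypos, hW⟩ := exists_hasDerivWithinAt_add_Ffn hf hc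
  by_contra! hneg
  have hanti : StrictAntiOn (fun u => y u + Ffn f u) (Icc 0 1) := by
    refine strictAntiOn_of_hasDerivWithinAt_neg
      (f' := fun v => c * a * Rab a b (y v)) (convex_Icc 0 1)
      (fun v hv => (hW v hv).continuousWithinAt) (fun v hv => ?_) (fun v hv => ?_)
    all_goals rw [interior_Icc] at hv
    · exact (hW v (Ioo_subset_Icc_self hv)).mono interior_subset
    · exact mul_neg_of_neg_of_pos (mul_neg_of_neg_of_pos hneg ha) (Rab_pos ha (hypos v hv))
  have h01 : y 1 + Ffn f 1 < y 0 + Ffn f 0 :=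
    hanti (left_mem_Icc.2 zero_le_one) (right_mem_Icc.2 zero_le_one) zero_lt_one
  rw [hy0, hy1, Ffn_zero, zero_add, add_zero] at h01
  exact h01.not_ge hF

lemma Ffn_le (ha : 0 < a) (hb : 0 < b) (hf : ContinuousOn f (Icc 0 1)) (hc0 : 0 ≤ c)
    (hc : Admissible f a b c) {v : ℝ} (hv : v ∈ Icc (0:ℝ) 1) : Ffn f v ≤ c * a / b * v := by
  obtain ⟨y, hy0, hy1, hypos, hW⟩ := exists_hasDerivWithinAt_add_Ffn hf hc
  have hG : ∀ u ∈ Icc (0:ℝ) 1, HasDerivWithinAt (fun u => y u + Ffn f u - c * a / b * u)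
      (c * a * Rab a b (y u) - c * a / b) (Icc 0 1) u := fun u hu => by
    have := (hW u hu).sub ((hasDerivWithinAt_id u _).const_mul (c * a / b))
    rwa [mul_one] at this
  have hanti : AntitoneOn (fun u => y u + Ffn f u - c * a / b * u) (Icc 0 1) := by
    refine antitoneOn_of_hasDerivWithinAt_nonpos
      (f' := fun u => c * a * Rab a b (y u) - c * a / b) (convex_Icc 0 1)
      (fun u hu => (hG u hu).continuousWithinAt) (fun u hu => ?_) (fun u hu => ?_)
    all_goals rw [interior_Icc] at hu
    · exact (hG u (Ioo_subset_Icc_self hu)).mono interior_subset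
    · have hR := Rab_le_one_div ha hb (hypos u hu).le
      rw [sub_nonpos, ← mul_one_div]
      exact mul_le_mul_of_nonneg_left hR (by positivity)
  have h0v : y v + Ffn f v - c * a / b * v ≤ y 0 + Ffn f 0 - c * a / b * 0 :=
    hanti (left_mem_Icc.2 zero_le_one) hv hv.1
  have hyv : 0 ≤ y v := by
    rcases eq_endpoints_or_mem_Ioo_of_mem_Icc hv with rfl | rfl | hv
    exacts [hy0.ge, hy1.ge, (hypos v hv).le]
  rw [hy0, Ffn_zero, add_zero, mul_zero, sub_zero] at h0v
  linarith

end Admissible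

/-- universal lower bound `c ≥ (b/a)·sup_{v ∈ (0,1]} F(v)/v`
for every admissible speed, for reactions of type A, B or C satisfying (H). -/
theorem statement2 (f : ℝ → ℝ) (a b : ℝ) (ha : 0 < a) (hb : 0 < b)
    (hH : HypH f) (hT : TypeA f ∨ ∃ α : ℝ, TypeB f α ∨ TypeC f α)
    (c : ℝ) (hc : Admissible f a b c) :
    b / a * (⨆ v : Set.Ioc (0:ℝ) 1, Ffn f v / (v : ℝ)) ≤ c := by
  have hf : ContinuousOn f (Icc 0 1) := hH.1
  have hc0 : 0 ≤ c := hc.nonneg ha hf (Ffn_one_nonneg hH hT)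
  have hsup : (⨆ v : Set.Ioc (0:ℝ) 1, Ffn f v / (v : ℝ)) ≤ c * a / b :=
    ciSup_le fun ⟨v, hv⟩ => (div_le_iff₀ hv.1).2 (hc.Ffn_le ha hb hf hc0 (Ioc_subset_Icc_self hv))
  calc b / a * (⨆ v : Set.Ioc (0:ℝ) 1, Ffn f v / (v : ℝ))
      ≤ b / a * (c * a / b) := mul_le_mul_of_nonneg_left hsup (by positivity)
    _ = c := by field_simp
end

section
/- Let a, b > 0 and let f : ℝ → ℝ be continuous on [0,1] with f(0) = f(1) = 0, f(s) > 0 for all s ∈ (0,1), and lim_{s→0⁺} f(s)/s = +∞. Then there exists no admissible speed (for f, a, b): for no c ∈ ℝ does the first-order boundary value problem admit a solution. -/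
open Real Set Filter Topology

/-!
Since `a R_{a,b}(s) ≤ √(2as)`, a solution satisfies `y' ≤ K √y - f(v)` with `K = |c| √(2a)`.
Comparing `y` with parabolas from `y(0) = 0` gives `√y(v) ≤ L v` with `L = K + 1`, hence
`y'(v) ≤ (K L - f(v)/v) v`. As `f(v)/v → ∞`, `y` is strictly decreasing on some `[0, d]`,
so `y(d) < y(0) = 0`, which contradicts `y > 0` on `(0,1)`.
-/

theorem mul_Rab_le_sqrt {a : ℝ} (ha : 0 < a) (b : ℝ) {s : ℝ} (hs : 0 ≤ s) :
    a * Rab a b s ≤ √(2 * a * s) := by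
  have hden : 0 < a + b ^ 2 * s := by positivity
  rw [Rab, mul_div_assoc', div_le_iff₀ hden]
  calc a * √(s * (2 * a + b ^ 2 * s)) = √(a ^ 2 * (s * (2 * a + b ^ 2 * s))) := by
        rw [Real.sqrt_mul (sq_nonneg a), Real.sqrt_sq ha.le]
    _ ≤ √(2 * a * s * (a + b ^ 2 * s) ^ 2) := Real.sqrt_le_sqrt <| by
        nlinarith [mul_nonneg (mul_nonneg ha.le hs) (sq_nonneg b),
          mul_nonneg hs (sq_nonneg (b ^ 2 * s)),
          mul_nonneg (mul_nonneg (mul_nonneg ha.le ha.le) hs) (sq_nonneg b)]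
    _ = √(2 * a * s) * (a + b ^ 2 * s) := by
        rw [Real.sqrt_mul (by positivity), Real.sqrt_sq hden.le]

theorem mul_mul_Rab_le {a : ℝ} (ha : 0 < a) (b c : ℝ) {s : ℝ} (hs : 0 ≤ s) :
    c * a * Rab a b s ≤ |c| * √(2 * a) * √s := by
  have hR : 0 ≤ a * Rab a b s := mul_nonneg ha.le (div_nonneg (Real.sqrt_nonneg _) (by positivity))
  calc c * a * Rab a b s = c * (a * Rab a b s) := mul_assoc _ _ _
    _ ≤ |c| * (a * Rab a b s) := mul_le_mul_of_nonneg_right (le_abs_self c) hR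
    _ ≤ |c| * √(2 * a * s) := mul_le_mul_of_nonneg_left (mul_Rab_le_sqrt ha b hs) (abs_nonneg c)
    _ = |c| * √(2 * a) * √s := by rw [Real.sqrt_mul (by positivity), mul_assoc]

/-- The parabolas `(L (t + ε))²`, `ε > 0`, are strict supersolutions of `y' = K √y` because
`K < 2 L`. -/
theorem le_sq_of_deriv_right_le_mul_sqrt {y y' : ℝ → ℝ} {r K L : ℝ} (hL : 0 < L)
    (hKL : K < 2 * L) (hy : ContinuousOn y (Icc 0 r)) (hy0 : y 0 ≤ 0)
    (hderiv : ∀ x ∈ Ico 0 r, HasDerivWithinAt y (y' x) (Ici x) x)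
    (hbound : ∀ x ∈ Ioo 0 r, y' x ≤ K * √(y x)) :
    ∀ v ∈ Icc 0 r, y v ≤ (L * v) ^ 2 := by
  intro v hv
  have hB : ∀ ε t : ℝ, HasDerivAt (fun t => (L * (t + ε)) ^ 2) (2 * L ^ 2 * (t + ε)) t :=
    fun ε t => ((((hasDerivAt_id' t).add_const ε).const_mul L).fun_pow 2).congr_deriv
      (by norm_num; ring)
  have hε : ∀ ε > 0, y v ≤ (L * (v + ε)) ^ 2 := by
    intro ε hε
    refine image_le_of_deriv_right_lt_deriv_boundary hy hderiv
      (hy0.trans (by positivity)) (hB ε) (fun x hx hyx => ?_) hv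
    obtain rfl | hx0 := hx.1.eq_or_lt
    · nlinarith [mul_pos hL hε]
    have hxε : 0 < x + ε := by linarith
    calc y' x ≤ K * √(y x) := hbound x ⟨hx0, hx.2⟩
      _ = K * (L * (x + ε)) := by rw [hyx, Real.sqrt_sq (by positivity)]
      _ < 2 * L ^ 2 * (x + ε) := by nlinarith [mul_pos hL hxε]
  have hlim : Tendsto (fun ε => (L * (v + ε)) ^ 2) (𝓝[>] 0) (𝓝 ((L * v) ^ 2)) := by
    have : Continuous (fun ε : ℝ => (L * (v + ε)) ^ 2) := by fun_prop
    simpa using (this.tendsto 0).mono_left nhdsWithin_le_nhds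
  exact ge_of_tendsto hlim (eventually_nhdsWithin_of_forall hε)

theorem exists_Ioo_mul_le_of_tendsto_div_atTop {f : ℝ → ℝ}
    (hf : Tendsto (fun s => f s / s) (𝓝[>] 0) atTop) (M : ℝ) {r : ℝ} (hr : 0 < r) :
    ∃ d ∈ Ioo 0 r, ∀ x ∈ Ioo 0 d, M * x ≤ f x := by
  obtain ⟨u, hu, hsub⟩ := mem_nhdsGT_iff_exists_Ioo_subset.mp (hf.eventually_ge_atTop M)
  have hu : 0 < u := hu
  refine ⟨min u r / 2, ⟨by positivity, by linarith [min_le_right u r]⟩, fun x hx => ?_⟩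
  have hxu : x ∈ Ioo 0 u := ⟨hx.1, by linarith [hx.2, min_le_left u r, lt_min hu hr]⟩
  exact (le_div_iff₀ hx.1).mp (hsub hxu)

theorem statement5_general (f : ℝ → ℝ) (a b : ℝ) (ha : 0 < a)
    (hpos : ∀ s ∈ Set.Ioo (0:ℝ) 1, 0 < f s)
    (hslope : Filter.Tendsto (fun s => f s / s)
      (nhdsWithin 0 (Set.Ioi 0)) Filter.atTop) :
    ∀ c : ℝ, ¬ Admissible f a b c := by
  rintro c ⟨y, hy0, -, hypos, hyd⟩
  set K := |c| * √(2 * a)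
  set L := K + 1
  have hK : 0 ≤ K := by positivity
  obtain ⟨d, ⟨hd0, hd1⟩, hfd⟩ := exists_Ioo_mul_le_of_tendsto_div_atTop hslope (K * L + 1) one_pos
  have hsub : Icc 0 d ⊆ Icc 0 1 := Icc_subset_Icc_right hd1.le
  have hIoo : ∀ x ∈ Ioo 0 d, x ∈ Ioo (0:ℝ) 1 := fun x hx => ⟨hx.1, hx.2.trans hd1⟩
  have hycont : ContinuousOn y (Icc 0 d) := fun v hv => (hyd v (hsub hv)).continuousWithinAt.mono hsub
  have hspeed : ∀ x ∈ Ioo 0 d, c * a * Rab a b (y x) - f x ≤ K * √(y x) - f x := fun x hx => by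
    linarith [mul_mul_Rab_le ha b c (hypos x (hIoo x hx)).le]
  have hparabola : ∀ v ∈ Icc 0 d, y v ≤ (L * v) ^ 2 := by
    refine le_sq_of_deriv_right_le_mul_sqrt (y' := fun x => c * a * Rab a b (y x) - f x) (K := K)
      (by positivity) (by linarith) hycont hy0.le (fun x hx => ?_) (fun x hx => ?_)
    · exact (hyd x (hsub (Ico_subset_Icc_self hx))).mono_of_mem_nhdsWithin
        (Icc_mem_nhdsGE_of_mem ⟨hx.1, hx.2.trans hd1⟩)
    · linarith [hspeed x hx, hpos x (hIoo x hx)]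
  have hsqrt : ∀ x ∈ Ioo 0 d, √(y x) ≤ L * x := fun x hx =>
    (Real.sqrt_le_left (mul_pos (by positivity) hx.1).le).mpr (hparabola x (Ioo_subset_Icc_self hx))
  have hanti : StrictAntiOn y (Icc 0 d) := by
    refine strictAntiOn_of_hasDerivWithinAt_neg (f' := fun x => c * a * Rab a b (y x) - f x)
      (convex_Icc 0 d) hycont (fun x hx => ?_) (fun x hx => ?_) <;> simp only [interior_Icc] at hx ⊢
    · exact (hyd x (hsub (Ioo_subset_Icc_self hx))).mono (Ioo_subset_Icc_self.trans hsub)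
    · nlinarith [hspeed x hx, hsqrt x hx, hfd x hx, hx.1]
  exact (hypos d ⟨hd0, hd1⟩).not_gt <|
    hy0 ▸ hanti (left_mem_Icc.2 hd0.le) (right_mem_Icc.2 hd0.le) hd0

/-- if `f > 0` on `(0,1)` and `f(s)/s → +∞` as `s → 0⁺`, then no
admissible speed exists. -/
theorem statement5 (f : ℝ → ℝ) (a b : ℝ) (ha : 0 < a) (hb : 0 < b)
    (hcont : ContinuousOn f (Set.Icc 0 1)) (h0 : f 0 = 0) (h1 : f 1 = 0)
    (hpos : ∀ s ∈ Set.Ioo (0:ℝ) 1, 0 < f s)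
    (hslope : Filter.Tendsto (fun s => f s / s)
      (nhdsWithin 0 (Set.Ioi 0)) Filter.atTop) :
    ∀ c : ℝ, ¬ Admissible f a b c :=
  statement5_general f a b ha hpos hslope
end

section
/- Let f satisfy hypothesis (H), be of type A, B, or C, with F(1) > 0. For ε > 0 let c_ε* be the critical speed for parameters a = b = 1/ε, let y_ε be the corresponding solution of the first-order reduction y'(v) = c_ε*·√(y(2ε + y))/(ε + y) − f(v) with y(0) = y(1) = 0 and y > 0 on (0,1), and let v_ε : ℝ → (0,1) be the increasing solution of v'(z) = √(y_ε(v(z))·(2ε + y_ε(v(z))))/(ε + y_ε(v(z))) with v_ε(0) = V₀. Assume that, as ε → 0⁺, c_ε* → c̄, y_ε → ȳ uniformly on [0,1], and v_ε → v̄ locally uniformly on ℝ. If there exist z₀ < z₁ and v₀ ∈ [0,1) such that v̄(z) = z − z₀ + v₀ for every z ∈ [z₀, z₁], and v₁ := v̄(z₁) ∈ (0,1], then c̄ = (F(v₁) − F(v₀))/(v₁ − v₀) + (ȳ(v₁) − ȳ(v₀))/(v₁ − v₀). -/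
/-!
Integrating the first-order reduction over `[v₀, v₁]` gives
`c_ε ∫_{v₀}^{v₁} g_ε = y_ε(v₁) - y_ε(v₀) + F(v₁) - F(v₀)`, where
`g_ε(v) = √(y_ε(2ε + y_ε))/(ε + y_ε) ∈ [0, 1]` is the speed `v_ε'` as a function of `v`;
so it suffices that `∫_{v₀}^{v₁} g_ε → v₁ - v₀`. The bound `g_ε ≤ 1` gives one inequality.
For the other, substituting `v = v_ε(z)` gives
`∫ g_ε dv = ∫ g_ε(v_ε)² dz ≥ ∫ (2 g_ε(v_ε) - 1) dz = 2 (v_ε(z₁) - v_ε(z₀)) - (z₁ - z₀)`,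
which tends to `v₁ - v₀` because `v̄` has slope `1` on `[z₀, z₁]`.
-/

open Real Set Filter Topology

/-- For `ε > 0`, `frontSlope ε s = ε⁻¹ * Rab ε⁻¹ ε⁻¹ s`. -/
noncomputable def frontSlope (ε y : ℝ) : ℝ := √(y * (2 * ε + y)) / (ε + y)

theorem frontSlope_nonneg {ε y : ℝ} (h : 0 ≤ ε + y) : 0 ≤ frontSlope ε y :=
  div_nonneg (sqrt_nonneg _) h

theorem frontSlope_le_one (ε y : ℝ) : frontSlope ε y ≤ 1 := by
  rcases le_or_gt (ε + y) 0 with h | h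
  · exact (div_nonpos_of_nonneg_of_nonpos (sqrt_nonneg _) h).trans zero_le_one
  · rw [frontSlope, div_le_one h]
    calc √(y * (2 * ε + y)) ≤ √((ε + y) ^ 2) := sqrt_le_sqrt (by nlinarith [sq_nonneg ε])
      _ = ε + y := sqrt_sq h.le

theorem frontSlope_mem_Icc {ε y : ℝ} (hε : 0 ≤ ε) (hy : 0 ≤ y) : frontSlope ε y ∈ Icc 0 1 :=
  ⟨frontSlope_nonneg (by positivity), frontSlope_le_one ε y⟩

theorem ContinuousOn.frontSlope {ε : ℝ} (hε : 0 < ε) {y : ℝ → ℝ} {s : Set ℝ}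
    (hy : ContinuousOn y s) (hy0 : ∀ v ∈ s, 0 ≤ y v) :
    ContinuousOn (fun v => frontSlope ε (y v)) s :=
  ((hy.mul (continuousOn_const.add hy)).sqrt).div (continuousOn_const.add hy)
    fun v hv => by linarith [hy0 v hv]

theorem nonneg_on_Icc_of_pos_on_Ioo {y : ℝ → ℝ} {a b : ℝ} (ha : y a = 0) (hb : y b = 0)
    (hpos : ∀ v ∈ Ioo a b, 0 < y v) : ∀ v ∈ Icc a b, 0 ≤ y v := by
  rintro v ⟨hav, hvb⟩
  rcases hav.eq_or_lt with rfl | hav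
  · exact ha.ge
  rcases hvb.eq_or_lt with rfl | hvb
  · exact hb.ge
  exact (hpos v ⟨hav, hvb⟩).le

theorem mul_intervalIntegral_eq_of_hasDerivWithinAt {y g f : ℝ → ℝ} {s : Set ℝ} {c p q : ℝ}
    (hpq : p ≤ q) (hs : Icc p q ⊆ s)
    (hy : ∀ v ∈ Icc p q, HasDerivWithinAt y (c * g v - f v) s v)
    (hg : ContinuousOn g (Icc p q)) (hf : ContinuousOn f (Icc p q)) :
    c * ∫ v in p..q, g v = y q - y p + ∫ v in p..q, f v := by
  have hderiv : ContinuousOn (fun v => c * g v - f v) (Icc p q) := by fun_prop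
  have hftc : ∫ v in p..q, (c * g v - f v) = y q - y p :=
    intervalIntegral.integral_eq_sub_of_hasDerivAt_of_le hpq
      (fun v hv => (hy v hv).continuousWithinAt.mono hs)
      (fun v hv => (hy v (Ioo_subset_Icc_self hv)).hasDerivAt
        (mem_of_superset (Icc_mem_nhds hv.1 hv.2) hs))
      (hderiv.intervalIntegrable_of_Icc hpq)
  rw [intervalIntegral.integral_sub ((hg.intervalIntegrable_of_Icc hpq).const_mul c)
    (hf.intervalIntegrable_of_Icc hpq), intervalIntegral.integral_const_mul] at hftc
  linarith

theorem two_mul_sub_le_intervalIntegral_of_hasDerivAt {v g : ℝ → ℝ} {s : Set ℝ} {z₀ z₁ : ℝ}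
    (hz : z₀ ≤ z₁) (hv : ∀ z ∈ uIcc z₀ z₁, HasDerivAt v (g (v z)) z)
    (hvs : MapsTo v (uIcc z₀ z₁) s) (hg : ContinuousOn g s) :
    2 * (v z₁ - v z₀) - (z₁ - z₀) ≤ ∫ x in v z₀..v z₁, g x := by
  have hgv : ContinuousOn (fun z => g (v z)) (uIcc z₀ z₁) :=
    hg.comp (HasDerivAt.continuousOn hv) hvs
  have hftc : ∫ z in z₀..z₁, g (v z) = v z₁ - v z₀ :=
    intervalIntegral.integral_eq_sub_of_hasDerivAt hv hgv.intervalIntegrable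
  rw [← intervalIntegral.integral_comp_mul_deriv' hv hgv (hg.mono (image_subset_iff.2 hvs))]
  simp only [Function.comp_apply]
  calc 2 * (v z₁ - v z₀) - (z₁ - z₀) = ∫ z in z₀..z₁, (2 * g (v z) - 1) := by
        rw [intervalIntegral.integral_sub (hgv.intervalIntegrable.const_mul 2)
          intervalIntegrable_const, intervalIntegral.integral_const_mul, hftc]
        simp
    _ ≤ ∫ z in z₀..z₁, g (v z) * g (v z) :=
        intervalIntegral.integral_mono_on hz
          ((hgv.intervalIntegrable.const_mul 2).sub intervalIntegrable_const)
          (hgv.mul hgv).intervalIntegrable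
          fun z _ => by nlinarith [sq_nonneg (g (v z) - 1)]

theorem abs_intervalIntegral_sub_intervalIntegral_le {g : ℝ → ℝ} {s : Set ℝ}
    (hs : s.OrdConnected) (hg : ContinuousOn g s) (hg1 : ∀ x ∈ s, |g x| ≤ 1) {a b c d : ℝ}
    (ha : a ∈ s) (hb : b ∈ s) (hc : c ∈ s) (hd : d ∈ s) :
    |(∫ x in a..b, g x) - ∫ x in c..d, g x| ≤ |c - a| + |d - b| := by
  have hint : ∀ {p q}, p ∈ s → q ∈ s → IntervalIntegrable g MeasureTheory.volume p q :=
    fun hp hq => (hg.mono (hs.uIcc_subset hp hq)).intervalIntegrable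
  have hbound : ∀ {p q}, p ∈ s → q ∈ s → |∫ x in p..q, g x| ≤ |q - p| := fun hp hq => by
    simpa using intervalIntegral.norm_integral_le_of_norm_le_const (f := g) (C := 1)
      fun x hx => (Real.norm_eq_abs _).trans_le <|
        hg1 x (hs.uIcc_subset hp hq (Ioc_subset_Icc_self hx))
  rw [intervalIntegral.integral_interval_sub_interval_comm (hint ha hb) (hint hc hd) (hint ha hc)]
  exact (abs_sub _ _).trans (add_le_add (hbound ha hc) (hbound hb hd))

theorem tendsto_intervalIntegral_of_flow_unit_slope {ι : Type*} {l : Filter ι}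
    {g v : ι → ℝ → ℝ} {s : Set ℝ} (hs : s.OrdConnected) {z₀ z₁ v₀ v₁ : ℝ} (hz : z₀ ≤ z₁)
    (hslope : v₁ - v₀ = z₁ - z₀) (hv₀ : v₀ ∈ s) (hv₁ : v₁ ∈ s)
    (hg : ∀ᶠ i in l, ContinuousOn (g i) s ∧ ∀ x ∈ s, g i x ∈ Icc 0 1)
    (hv : ∀ᶠ i in l, (∀ z, v i z ∈ s) ∧ ∀ z, HasDerivAt (v i) (g i (v i z)) z)
    (h₀ : Tendsto (fun i => v i z₀) l (𝓝 v₀)) (h₁ : Tendsto (fun i => v i z₁) l (𝓝 v₁)) :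
    Tendsto (fun i => ∫ x in v₀..v₁, g i x) l (𝓝 (v₁ - v₀)) := by
  have hupper : ∀ᶠ i in l, ∫ x in v₀..v₁, g i x ≤ v₁ - v₀ := by
    filter_upwards [hg] with i ⟨hgc, hg01⟩
    simpa using intervalIntegral.integral_mono_on (μ := MeasureTheory.volume) (by linarith)
      (hgc.mono (hs.uIcc_subset hv₀ hv₁)).intervalIntegrable intervalIntegrable_const
      fun x hx => (hg01 x (hs.out hv₀ hv₁ hx)).2
  have hlower : ∀ᶠ i in l, 2 * (v i z₁ - v i z₀) - (z₁ - z₀)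
      - (|v i z₀ - v₀| + |v i z₁ - v₁|) ≤ ∫ x in v₀..v₁, g i x := by
    filter_upwards [hg, hv] with i ⟨hgc, hg01⟩ ⟨hvs, hvd⟩
    have hflow := two_mul_sub_le_intervalIntegral_of_hasDerivAt hz (fun z _ => hvd z)
      (fun z _ => hvs z) hgc
    have htransfer := abs_intervalIntegral_sub_intervalIntegral_le hs hgc
      (fun x hx => abs_le.2 ⟨by linarith [(hg01 x hx).1], (hg01 x hx).2⟩)
      hv₀ hv₁ (hvs z₀) (hvs z₁)
    linarith [(abs_le.1 htransfer).1]
  have hlim : Tendsto (fun i => 2 * (v i z₁ - v i z₀) - (z₁ - z₀)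
      - (|v i z₀ - v₀| + |v i z₁ - v₁|)) l (𝓝 (v₁ - v₀)) := by
    have h := (((h₁.sub h₀).const_mul 2).sub_const (z₁ - z₀)).sub
      (((h₀.sub_const v₀).abs).add ((h₁.sub_const v₁).abs))
    convert h using 2
    simp only [sub_self, abs_zero]
    linarith
  exact tendsto_of_tendsto_of_tendsto_of_le_of_le' hlim tendsto_const_nhds hlower hupper

theorem statement13_general (f : ℝ → ℝ) (V₀ : ℝ) (hH : HypH f)
    (cfun : ℝ → ℝ) (yfun : ℝ → ℝ → ℝ) (vfun : ℝ → ℝ → ℝ)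
    (hy : ∀ ε : ℝ, 0 < ε → yfun ε 0 = 0 ∧ yfun ε 1 = 0 ∧
      (∀ v ∈ Set.Ioo (0:ℝ) 1, 0 < yfun ε v) ∧
      ∀ v ∈ Set.Icc (0:ℝ) 1,
        HasDerivWithinAt (yfun ε)
          (cfun ε * Real.sqrt (yfun ε v * (2 * ε + yfun ε v)) / (ε + yfun ε v) - f v)
          (Set.Icc 0 1) v)
    (hv : ∀ ε : ℝ, 0 < ε → (∀ z, vfun ε z ∈ Set.Ioo (0:ℝ) 1) ∧
      StrictMono (vfun ε) ∧ vfun ε 0 = V₀ ∧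
      ∀ z, HasDerivAt (vfun ε)
        (Real.sqrt (yfun ε (vfun ε z) * (2 * ε + yfun ε (vfun ε z)))
          / (ε + yfun ε (vfun ε z))) z)
    (cbar : ℝ) (ybar vbar : ℝ → ℝ)
    (hcconv : Filter.Tendsto cfun (nhdsWithin 0 (Set.Ioi 0)) (nhds cbar))
    (hyconv : TendstoUniformlyOn yfun ybar (nhdsWithin 0 (Set.Ioi 0)) (Set.Icc 0 1))
    (hvconv : ∀ K : Set ℝ, IsCompact K →
      TendstoUniformlyOn vfun vbar (nhdsWithin 0 (Set.Ioi 0)) K)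
    (z₀ z₁ v₀ : ℝ) (hz : z₀ < z₁) (hv₀ : v₀ ∈ Set.Ico (0:ℝ) 1)
    (hlin : ∀ z ∈ Set.Icc z₀ z₁, vbar z = z - z₀ + v₀)
    (hv₁ : vbar z₁ ∈ Set.Ioc (0:ℝ) 1) :
    cbar = (Ffn f (vbar z₁) - Ffn f v₀) / (vbar z₁ - v₀)
      + (ybar (vbar z₁) - ybar v₀) / (vbar z₁ - v₀) := by
  have hslope : vbar z₁ - v₀ = z₁ - z₀ := by rw [hlin z₁ ⟨hz.le, le_rfl⟩]; ring
  have hv₀I : v₀ ∈ Icc (0:ℝ) 1 := Ico_subset_Icc_self hv₀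
  have hv₁I : vbar z₁ ∈ Icc (0:ℝ) 1 := Ioc_subset_Icc_self hv₁
  have hsol : ∀ᶠ ε in 𝓝[>] (0:ℝ), 0 < ε ∧ ContinuousOn (yfun ε) (Icc 0 1) ∧
      ∀ v ∈ Icc (0:ℝ) 1, 0 ≤ yfun ε v := by
    filter_upwards [self_mem_nhdsWithin] with ε hε
    obtain ⟨h0, h1, hpos, hder⟩ := hy ε hε
    exact ⟨hε, fun v hv => (hder v hv).continuousWithinAt,
      nonneg_on_Icc_of_pos_on_Ioo h0 h1 hpos⟩
  have hkey : ∀ᶠ ε in 𝓝[>] (0:ℝ), cfun ε * ∫ v in v₀..vbar z₁, frontSlope ε (yfun ε v)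
      = yfun ε (vbar z₁) - yfun ε v₀ + (Ffn f (vbar z₁) - Ffn f v₀) := by
    filter_upwards [hsol] with ε ⟨hε, hyc, hy0⟩
    have hsub : Icc v₀ (vbar z₁) ⊆ Icc 0 1 := Icc_subset_Icc hv₀.1 hv₁.2
    rw [Ffn, Ffn, intervalIntegral.integral_interval_sub_left
      (hH.1.mono (uIcc_subset_Icc ⟨le_rfl, zero_le_one⟩ hv₁I)).intervalIntegrable
      (hH.1.mono (uIcc_subset_Icc ⟨le_rfl, zero_le_one⟩ hv₀I)).intervalIntegrable]
    refine mul_intervalIntegral_eq_of_hasDerivWithinAt (by linarith) hsub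
      (fun v hv => by simpa only [frontSlope, mul_div_assoc] using (hy ε hε).2.2.2 v (hsub hv))
      ((hyc.frontSlope hε hy0).mono hsub) (hH.1.mono hsub)
  have hI := tendsto_intervalIntegral_of_flow_unit_slope ordConnected_Icc hz.le hslope hv₀I hv₁I
    (hsol.mono fun ε ⟨hε, hyc, hy0⟩ =>
      ⟨hyc.frontSlope hε hy0, fun v hv => frontSlope_mem_Icc hε.le (hy0 v hv)⟩)
    (eventually_mem_nhdsWithin.mono fun ε hε =>
      ⟨fun z => Ioo_subset_Icc_self ((hv ε hε).1 z), (hv ε hε).2.2.2⟩)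
    (by simpa [hlin z₀ ⟨le_rfl, hz.le⟩] using
      (hvconv {z₀} isCompact_singleton).tendsto_at (mem_singleton z₀))
    ((hvconv {z₁} isCompact_singleton).tendsto_at (mem_singleton z₁))
  have hlim := tendsto_nhds_unique ((hcconv.mul hI).congr' hkey)
    (((hyconv.tendsto_at hv₁I).sub (hyconv.tendsto_at hv₀I)).add tendsto_const_nhds)
  rw [← add_div, eq_div_iff (by linarith)]
  linarith

/-- Proposition 4.2: singular perturbation `a = b = 1/ε`. If the limit
profile contains a linear piece of slope `1` between the values `v₀` and `v₁`, then
`c̄ = (F(v₁) − F(v₀))/(v₁ − v₀) + (ȳ(v₁) − ȳ(v₀))/(v₁ − v₀)`. -/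
theorem statement13 (f : ℝ → ℝ) (V₀ : ℝ) (hH : HypH f)
    (hT : (TypeA f ∧ V₀ = 1/2) ∨ ∃ α : ℝ, (TypeB f α ∨ TypeC f α) ∧ V₀ = α)
    (hF1 : 0 < Ffn f 1)
    (cfun : ℝ → ℝ) (yfun : ℝ → ℝ → ℝ) (vfun : ℝ → ℝ → ℝ)
    (hcrit : ∀ ε : ℝ, 0 < ε → IsLeast {c | Admissible f (1/ε) (1/ε) c} (cfun ε))
    (hy : ∀ ε : ℝ, 0 < ε → yfun ε 0 = 0 ∧ yfun ε 1 = 0 ∧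
      (∀ v ∈ Set.Ioo (0:ℝ) 1, 0 < yfun ε v) ∧
      ∀ v ∈ Set.Icc (0:ℝ) 1,
        HasDerivWithinAt (yfun ε)
          (cfun ε * Real.sqrt (yfun ε v * (2 * ε + yfun ε v)) / (ε + yfun ε v) - f v)
          (Set.Icc 0 1) v)
    (hv : ∀ ε : ℝ, 0 < ε → (∀ z, vfun ε z ∈ Set.Ioo (0:ℝ) 1) ∧
      StrictMono (vfun ε) ∧ vfun ε 0 = V₀ ∧
      ∀ z, HasDerivAt (vfun ε)
        (Real.sqrt (yfun ε (vfun ε z) * (2 * ε + yfun ε (vfun ε z)))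
          / (ε + yfun ε (vfun ε z))) z)
    (cbar : ℝ) (ybar vbar : ℝ → ℝ)
    (hcconv : Filter.Tendsto cfun (nhdsWithin 0 (Set.Ioi 0)) (nhds cbar))
    (hyconv : TendstoUniformlyOn yfun ybar (nhdsWithin 0 (Set.Ioi 0)) (Set.Icc 0 1))
    (hvconv : ∀ K : Set ℝ, IsCompact K →
      TendstoUniformlyOn vfun vbar (nhdsWithin 0 (Set.Ioi 0)) K)
    (z₀ z₁ v₀ : ℝ) (hz : z₀ < z₁) (hv₀ : v₀ ∈ Set.Ico (0:ℝ) 1)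
    (hlin : ∀ z ∈ Set.Icc z₀ z₁, vbar z = z - z₀ + v₀)
    (hv₁ : vbar z₁ ∈ Set.Ioc (0:ℝ) 1) :
    cbar = (Ffn f (vbar z₁) - Ffn f v₀) / (vbar z₁ - v₀)
      + (ybar (vbar z₁) - ybar v₀) / (vbar z₁ - v₀) :=
  statement13_general f V₀ hH cfun yfun vfun hy hv cbar ybar vbar hcconv hyconv hvconv z₀ z₁ v₀ hz
    hv₀ hlin hv₁
end

section
/- Let f satisfy hypothesis (H), be of type A, B, or C, with F(1) > 0. For ε > 0 let c_ε* be the critical speed for parameters a = b = 1/ε and let v_ε be the corresponding critical front profile normalized by v_ε(0) = V₀. Assume that c_ε* → c̄ and v_ε → v̄ locally uniformly on ℝ as ε → 0⁺. If v̄(z) = min(max(z + V₀, 0), 1) for every z ∈ ℝ (the fully piecewise linear limit profile with slope 1), then c̄ = F(1) = ∫₀¹ f(s) ds. -/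
open Real Set Filter Topology

/-! The slope of the profile is `g = R_{ε,1}(y)`, which lies in `[0, 1]`. Integrating the
first-order reduction `y' = c g − f` over `[0, 1]` gives `c ∫₀¹ g = F(1)`, hence `F(1) ≤ c`.
Along the profile `v' = g(v)`, so `2x − 1 ≤ x²` and the substitution `u = v(z)` give
`2 (v z₂ − v z₁) − (z₂ − z₁) ≤ ∫ g(v)² = ∫_{v z₁}^{v z₂} g ≤ ∫₀¹ g`; multiplied by `c` this is at
most `F(1)`. The limit profile climbs from `0` to `1` over the unit interval `[−V₀, 1 − V₀]`,
so in the limit `c̄ ≤ F(1)`. -/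

open intervalIntegral

section Rab

variable {a b s : ℝ}

lemma Rab_one : Rab a 1 s = √(s * (2 * a + s)) / (a + s) := by
  simp [Rab]

lemma Rab_nonneg (ha : 0 < a) (hs : 0 ≤ s) : 0 ≤ Rab a b s := by
  unfold Rab; positivity

lemma abs_mul_Rab_le_one (ha : 0 < a) (hs : 0 ≤ s) : |b| * Rab a b s ≤ 1 := by
  have hD : 0 < a + b ^ 2 * s := by positivity
  rw [Rab, ← mul_div_assoc, div_le_one hD, ← Real.sqrt_sq_eq_abs,
    ← Real.sqrt_mul (sq_nonneg b)]
  calc √(b ^ 2 * (s * (2 * a + b ^ 2 * s))) ≤ √((a + b ^ 2 * s) ^ 2) :=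
        Real.sqrt_le_sqrt (by nlinarith [sq_nonneg a])
    _ = a + b ^ 2 * s := Real.sqrt_sq hD.le

lemma continuousOn_Rab (ha : 0 < a) : ContinuousOn (Rab a b) (Ici 0) := by
  unfold Rab
  refine ContinuousOn.div (by fun_prop) (by fun_prop) fun s (hs : 0 ≤ s) => ?_
  positivity

end Rab

section FirstOrderReduction

variable {f g y v : ℝ → ℝ} {c : ℝ}

lemma mul_integral_eq_Ffn (hf : ContinuousOn f (Icc 0 1)) (hg : ContinuousOn g (Icc 0 1))
    (hy01 : y 0 = y 1)
    (hy : ∀ u ∈ Icc (0:ℝ) 1, HasDerivWithinAt y (c * g u - f u) (Icc 0 1) u) :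
    c * ∫ u in (0:ℝ)..1, g u = Ffn f 1 := by
  have hint : ∀ h : ℝ → ℝ, ContinuousOn h (Icc 0 1) →
      IntervalIntegrable h MeasureTheory.volume 0 1 :=
    fun h hh => hh.intervalIntegrable_of_Icc zero_le_one
  have hFTC : ∫ u in (0:ℝ)..1, (c * g u - f u) = y 1 - y 0 :=
    integral_eq_sub_of_hasDerivAt_of_le zero_le_one
      (fun u hu => (hy u hu).continuousWithinAt)
      (fun u hu => (hy u (Ioo_subset_Icc_self hu)).hasDerivAt (Icc_mem_nhds hu.1 hu.2))
      (hint _ ((continuousOn_const.mul hg).sub hf))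
  rw [integral_sub (f := fun u => c * g u) (hint _ (continuousOn_const.mul hg)) (hint f hf),
    integral_const_mul, hy01, sub_self, sub_eq_zero] at hFTC
  exact hFTC

lemma integral_comp_sq_eq (hv : ∀ z, HasDerivAt v (g (v z)) z) (hg : ∀ z, 0 ≤ g (v z))
    (z₁ z₂ : ℝ) : ∫ z in z₁..z₂, g (v z) ^ 2 = ∫ u in v z₁..v z₂, g u := by
  simp_rw [sq]
  exact integral_comp_mul_deriv_of_deriv_nonneg
    (fun z _ => (hv z).continuousAt.continuousWithinAt) (fun z _ => hv z) (fun z _ => hg z)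

lemma two_mul_sub_le_integral (hg : ContinuousOn g (Icc 0 1))
    (hg0 : ∀ u ∈ Icc (0:ℝ) 1, 0 ≤ g u)
    (hvmem : ∀ z, v z ∈ Icc (0:ℝ) 1) (hvmono : Monotone v)
    (hv : ∀ z, HasDerivAt v (g (v z)) z) {z₁ z₂ : ℝ} (hz : z₁ ≤ z₂) :
    2 * (v z₂ - v z₁) - (z₂ - z₁) ≤ ∫ u in (0:ℝ)..1, g u := by
  have hv_cont : Continuous v := continuous_iff_continuousAt.2 fun z => (hv z).continuousAt
  have hgv_cont : Continuous fun z => g (v z) := hg.comp_continuous hv_cont hvmem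
  have hFTC : ∫ z in z₁..z₂, g (v z) = v z₂ - v z₁ :=
    integral_eq_sub_of_hasDerivAt (fun z _ => hv z) (hgv_cont.intervalIntegrable _ _)
  calc 2 * (v z₂ - v z₁) - (z₂ - z₁) = ∫ z in z₁..z₂, (2 * g (v z) - 1) := by
        rw [integral_sub (f := fun z => 2 * g (v z))
          ((continuous_const.mul hgv_cont).intervalIntegrable _ _) intervalIntegrable_const,
          integral_const_mul, hFTC, intervalIntegral.integral_const, smul_eq_mul, mul_one]
    _ ≤ ∫ z in z₁..z₂, g (v z) ^ 2 :=
        integral_mono_on hz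
          (((continuous_const.mul hgv_cont).sub continuous_const).intervalIntegrable _ _)
          ((hgv_cont.pow 2).intervalIntegrable _ _)
          fun z _ => by nlinarith [sq_nonneg (g (v z) - 1)]
    _ = ∫ u in v z₁..v z₂, g u := integral_comp_sq_eq hv (fun z => hg0 _ (hvmem z)) z₁ z₂
    _ ≤ ∫ u in (0:ℝ)..1, g u :=
        integral_mono_interval (hvmem z₁).1 (hvmono hz) (hvmem z₂).2
          ((MeasureTheory.ae_restrict_iff' measurableSet_Ioc).2
            (Eventually.of_forall fun u hu => hg0 u (Ioc_subset_Icc_self hu)))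
          (hg.intervalIntegrable_of_Icc zero_le_one)

end FirstOrderReduction

lemma critical_speed_bounds {f y v : ℝ → ℝ} {ε c : ℝ} (hf : ContinuousOn f (Icc 0 1))
    (hF : 0 < Ffn f 1) (hε : 0 < ε) (hy0 : y 0 = 0) (hy1 : y 1 = 0)
    (hypos : ∀ u ∈ Ioo (0:ℝ) 1, 0 < y u)
    (hy : ∀ u ∈ Icc (0:ℝ) 1, HasDerivWithinAt y
      (c * √(y u * (2 * ε + y u)) / (ε + y u) - f u) (Icc 0 1) u)
    (hvmem : ∀ z, v z ∈ Ioo (0:ℝ) 1) (hvmono : Monotone v)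
    (hv : ∀ z, HasDerivAt v (√(y (v z) * (2 * ε + y (v z))) / (ε + y (v z))) z) :
    Ffn f 1 ≤ c ∧ ∀ ⦃z₁ z₂ : ℝ⦄, z₁ ≤ z₂ → c * (2 * (v z₂ - v z₁) - (z₂ - z₁)) ≤ Ffn f 1 := by
  set g : ℝ → ℝ := fun u => Rab ε 1 (y u)
  have hy_nonneg : ∀ u ∈ Icc (0:ℝ) 1, 0 ≤ y u := by
    rintro u ⟨hu0, hu1⟩
    rcases hu0.eq_or_lt with rfl | hu0
    · exact hy0.ge
    rcases hu1.eq_or_lt with rfl | hu1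
    · exact hy1.ge
    exact (hypos u ⟨hu0, hu1⟩).le
  have hg : ContinuousOn g (Icc 0 1) :=
    (continuousOn_Rab hε).comp (fun u hu => (hy u hu).continuousWithinAt) hy_nonneg
  have hg0 : ∀ u ∈ Icc (0:ℝ) 1, 0 ≤ g u := fun u hu => Rab_nonneg hε (hy_nonneg u hu)
  have hg1 : ∀ u ∈ Icc (0:ℝ) 1, g u ≤ 1 := fun u hu => by
    simpa using abs_mul_Rab_le_one (b := 1) hε (hy_nonneg u hu)
  have hcI : c * ∫ u in (0:ℝ)..1, g u = Ffn f 1 :=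
    mul_integral_eq_Ffn hf hg (hy0.trans hy1.symm) fun u hu => by
      simpa only [g, Rab_one, mul_div_assoc] using hy u hu
  have hI0 : 0 ≤ ∫ u in (0:ℝ)..1, g u := integral_nonneg zero_le_one hg0
  have hI1 : ∫ u in (0:ℝ)..1, g u ≤ 1 := by
    simpa using integral_mono_on zero_le_one (hg.intervalIntegrable_of_Icc zero_le_one)
      (intervalIntegrable_const (μ := MeasureTheory.volume)) hg1
  have hc : 0 ≤ c := by
    by_contra! hc
    nlinarith
  refine ⟨by nlinarith, fun z₁ z₂ hz => ?_⟩
  calc c * (2 * (v z₂ - v z₁) - (z₂ - z₁)) ≤ c * ∫ u in (0:ℝ)..1, g u :=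
        mul_le_mul_of_nonneg_left (two_mul_sub_le_integral hg hg0
          (fun z => Ioo_subset_Icc_self (hvmem z)) hvmono
          (fun z => by simpa only [g, Rab_one] using hv z) hz) hc
    _ = Ffn f 1 := hcI

theorem statement14_general (f : ℝ → ℝ) (V₀ : ℝ) (hH : HypH f)
    (hF1 : 0 < Ffn f 1)
    (cfun : ℝ → ℝ) (yfun : ℝ → ℝ → ℝ) (vfun : ℝ → ℝ → ℝ)
    (hy : ∀ ε : ℝ, 0 < ε → yfun ε 0 = 0 ∧ yfun ε 1 = 0 ∧
      (∀ v ∈ Set.Ioo (0:ℝ) 1, 0 < yfun ε v) ∧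
      ∀ v ∈ Set.Icc (0:ℝ) 1,
        HasDerivWithinAt (yfun ε)
          (cfun ε * Real.sqrt (yfun ε v * (2 * ε + yfun ε v)) / (ε + yfun ε v) - f v)
          (Set.Icc 0 1) v)
    (hv : ∀ ε : ℝ, 0 < ε → (∀ z, vfun ε z ∈ Set.Ioo (0:ℝ) 1) ∧
      StrictMono (vfun ε) ∧ vfun ε 0 = V₀ ∧
      ∀ z, HasDerivAt (vfun ε)
        (Real.sqrt (yfun ε (vfun ε z) * (2 * ε + yfun ε (vfun ε z)))
          / (ε + yfun ε (vfun ε z))) z)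
    (cbar : ℝ) (vbar : ℝ → ℝ)
    (hcconv : Filter.Tendsto cfun (nhdsWithin 0 (Set.Ioi 0)) (nhds cbar))
    (hvconv : ∀ K : Set ℝ, IsCompact K →
      TendstoUniformlyOn vfun vbar (nhdsWithin 0 (Set.Ioi 0)) K)
    (hbar : ∀ z : ℝ, vbar z = min (max (z + V₀) 0) 1) :
    cbar = Ffn f 1 := by
  have bounds : ∀ ε ∈ Ioi (0:ℝ), Ffn f 1 ≤ cfun ε ∧ ∀ ⦃z₁ z₂ : ℝ⦄, z₁ ≤ z₂ →
      cfun ε * (2 * (vfun ε z₂ - vfun ε z₁) - (z₂ - z₁)) ≤ Ffn f 1 := fun ε hε => by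
    obtain ⟨hy0, hy1, hypos, hyd⟩ := hy ε hε
    obtain ⟨hvmem, hvmono, -, hvd⟩ := hv ε hε
    exact critical_speed_bounds hH.1 hF1 hε hy0 hy1 hypos hyd hvmem hvmono.monotone hvd
  have hvlim (z : ℝ) : Tendsto (fun ε => vfun ε z) (𝓝[>] 0) (𝓝 (vbar z)) :=
    (hvconv {z} isCompact_singleton).tendsto_at rfl
  have hlower : Ffn f 1 ≤ cbar :=
    ge_of_tendsto hcconv (eventually_nhdsWithin_of_forall fun ε hε => (bounds ε hε).1)
  have hupper : cbar * (2 * (vbar (1 - V₀) - vbar (-V₀)) - (1 - V₀ - -V₀)) ≤ Ffn f 1 :=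
    le_of_tendsto (hcconv.mul ((((hvlim _).sub (hvlim _)).const_mul 2).sub tendsto_const_nhds))
      (eventually_nhdsWithin_of_forall fun ε hε => (bounds ε hε).2 (by linarith))
  norm_num [hbar] at hupper
  linarith

/-- Corollary 4.3: singular perturbation `a = b = 1/ε`. If the critical
profiles converge (locally uniformly) to the fully piecewise linear limit profile
`z ↦ min(max(z + V₀, 0), 1)`, then the limit critical speed equals `F(1) = ∫₀¹ f`. -/
theorem statement14 (f : ℝ → ℝ) (V₀ : ℝ) (hH : HypH f)
    (hT : (TypeA f ∧ V₀ = 1/2) ∨ ∃ α : ℝ, (TypeB f α ∨ TypeC f α) ∧ V₀ = α)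
    (hF1 : 0 < Ffn f 1)
    (cfun : ℝ → ℝ) (yfun : ℝ → ℝ → ℝ) (vfun : ℝ → ℝ → ℝ)
    (hcrit : ∀ ε : ℝ, 0 < ε → IsLeast {c | Admissible f (1/ε) (1/ε) c} (cfun ε))
    (hy : ∀ ε : ℝ, 0 < ε → yfun ε 0 = 0 ∧ yfun ε 1 = 0 ∧
      (∀ v ∈ Set.Ioo (0:ℝ) 1, 0 < yfun ε v) ∧
      ∀ v ∈ Set.Icc (0:ℝ) 1,
        HasDerivWithinAt (yfun ε)
          (cfun ε * Real.sqrt (yfun ε v * (2 * ε + yfun ε v)) / (ε + yfun ε v) - f v)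
          (Set.Icc 0 1) v)
    (hv : ∀ ε : ℝ, 0 < ε → (∀ z, vfun ε z ∈ Set.Ioo (0:ℝ) 1) ∧
      StrictMono (vfun ε) ∧ vfun ε 0 = V₀ ∧
      ∀ z, HasDerivAt (vfun ε)
        (Real.sqrt (yfun ε (vfun ε z) * (2 * ε + yfun ε (vfun ε z)))
          / (ε + yfun ε (vfun ε z))) z)
    (cbar : ℝ) (vbar : ℝ → ℝ)
    (hcconv : Filter.Tendsto cfun (nhdsWithin 0 (Set.Ioi 0)) (nhds cbar))
    (hvconv : ∀ K : Set ℝ, IsCompact K →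
      TendstoUniformlyOn vfun vbar (nhdsWithin 0 (Set.Ioi 0)) K)
    (hbar : ∀ z : ℝ, vbar z = min (max (z + V₀) 0) 1) :
    cbar = Ffn f 1 :=
  statement14_general f V₀ hH hF1 cfun yfun vfun hy hv cbar vbar hcconv hvconv hbar
end
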